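/- For p, q ∈ (1/2)ℤ with p + q ∈ 1/2 + ℤ, the operators G_p defined on W = ℂ[x] ⊕ ℂ[y] satisfy G_p G_q f + G_q G_p f = (−1)^{2p+1}(p − q) I_{p+q} f for all f ∈ ℂ[x], where I_r f(x) = −2 t^{2r} λ^r α f(x + r). -/

import Mathlib

/-!
Both composites shift the argument by `(a + b)/2`, so each equals
`(-1)^a t^(a+b) ν^(a+b) (x + aα) f(x + (a+b)/2)` up to swapping `a` and `b`. Since `a + b` is odd,
`(-1)^b = -(-1)^a`: the two terms enter with opposite signs, the `x`'s cancel and `(a - b) α` remains.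
-/

open Polynomial

/- Half-integers `p ∈ (1/2)ℤ` are encoded by their doubles `a = 2p ∈ ℤ`; `λ^p = ν^a`
for a fixed square root `ν` of `λ`, `t^{2p} = t^a`, `(−t)^{2p} = (−t)^a`. -/

/-- `G_p : ℂ[x] → ℂ[y]`, `G_p f(x) = t^{2p} λ^p f(y + p)`. -/
noncomputable def Geo (t nu : ℂ) (a : ℤ) (f : Polynomial ℂ) : Polynomial ℂ :=
  (t ^ a * nu ^ a) • f.comp (X + C ((a : ℂ) / 2))

/-- `G_p : ℂ[y] → ℂ[x]`, `G_p g(y) = (−t)^{2p} λ^p (x + 2pα) g(x + p)`. -/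
noncomputable def Goe (t nu α : ℂ) (a : ℤ) (g : Polynomial ℂ) : Polynomial ℂ :=
  ((-t) ^ a * nu ^ a) • ((X + C ((a : ℂ) * α)) * g.comp (X + C ((a : ℂ) / 2)))

/-- `I_r f(x) = −2 t^{2r} λ^r α f(x + r)` for `r = c/2`, `c` odd. -/
noncomputable def Ie (t nu α : ℂ) (c : ℤ) (f : Polynomial ℂ) : Polynomial ℂ :=
  (-2 * t ^ c * nu ^ c * α) • f.comp (X + C ((c : ℂ) / 2))

theorem Polynomial.comp_X_add_C_comp_X_add_C {R : Type*} [CommSemiring R] (f : R[X]) (u v : R) :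
    (f.comp (X + C u)).comp (X + C v) = f.comp (X + C (u + v)) := by
  rw [comp_assoc, add_comp, X_comp, C_comp, add_assoc, ← C_add, add_comm v]

theorem neg_one_zpow_eq_neg_of_odd_add {R : Type*} [DivisionRing R] {a b : ℤ} (h : Odd (a + b)) :
    (-1 : R) ^ b = -(-1) ^ a := by
  rcases Int.even_or_odd a with ha | ha
  · rw [ha.neg_one_zpow, ((Int.odd_add'.mp h).mpr ha).neg_one_zpow]
  · rw [ha.neg_one_zpow, ((Int.odd_add.mp h).mp ha).neg_one_zpow, neg_neg]

theorem Goe_Geo (t nu α : ℂ) {a b : ℤ} (hab : a + b ≠ 0) (f : ℂ[X]) :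
    Goe t nu α a (Geo t nu b f) =
      ((-1) ^ a * t ^ (a + b) * nu ^ (a + b)) •
        ((X + C (a * α)) * f.comp (X + C (((a + b : ℤ) : ℂ) / 2))) := by
  rw [Goe, Geo, smul_comp, comp_X_add_C_comp_X_add_C, mul_smul_comm, smul_smul]
  congr 1
  · rw [zpow_add' (Or.inr (Or.inl hab)), zpow_add' (Or.inr (Or.inl hab)), neg_eq_neg_one_mul,
      mul_zpow]
    ring
  · rw [Int.cast_add, add_div, add_comm ((b : ℂ) / 2)]

theorem stmt5_general (t nu α : ℂ)
    (a b : ℤ) (hab : Odd (a + b)) (f : Polynomial ℂ) :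
    Goe t nu α a (Geo t nu b f) + Goe t nu α b (Geo t nu a f)
      = ((-1 : ℂ) ^ (a + 1) * (((a : ℂ) - (b : ℂ)) / 2)) • Ie t nu α (a + b) f := by
  have hab0 : a + b ≠ 0 := fun h ↦ Int.not_odd_zero (h ▸ hab)
  rw [Goe_Geo t nu α hab0, Goe_Geo t nu α (by rwa [add_comm]), add_comm b a,
    neg_one_zpow_eq_neg_of_odd_add hab, Ie, zpow_add_one₀ (neg_ne_zero.mpr one_ne_zero)]
  simp only [add_mul, ← smul_eq_C_mul]
  module

/-- For `p + q ∈ 1/2 + ℤ`, the anticommutator `[G_p, G_q]` acts on the even part as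
`(−1)^{2p+1} (p − q) I_{p+q}`. -/
theorem stmt5 (t nu α : ℂ) (ht : t = 1 ∨ t = -1) (hnu : nu ≠ 0)
    (a b : ℤ) (hab : Odd (a + b)) (f : Polynomial ℂ) :
    Goe t nu α a (Geo t nu b f) + Goe t nu α b (Geo t nu a f)
      = ((-1 : ℂ) ^ (a + 1) * (((a : ℂ) - (b : ℂ)) / 2)) • Ie t nu α (a + b) f :=
  stmt5_general t nu α a b hab f
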